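/- arXiv:2410.00530 — 8 statements merged into one kernel-verified Lean document; each statement's English description precedes it below -/
import Mathlib

section
/- Let X be a metric space and u : X → ℝ be lower semicontinuous. Then the global slope G[u] : X → [0, +∞] is lower semicontinuous. -/
open Filter Topology ENNReal

/-- The global slope of a real-valued function `u` on a metric space:
`G[u](x) = sup_{y ≠ x} (u x - u y)⁺ / d(x,y)`, with values in `[0, ∞]`. -/
noncomputable def gslope {X : Type*} [MetricSpace X] (u : X → ℝ) (x : X) : ℝ≥0∞ :=
  ⨆ (y : X) (_ : y ≠ x), ENNReal.ofReal ((u x - u y) / dist x y)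

/-!
A difference quotient `x ↦ (u x - u y) / d(x, y)` with `u` lower semicontinuous is lower
semicontinuous away from `y`, since `t < (u x - u y) / d(x, y)` is the open condition
`0 < u x - u y - t d(x, y)`. After truncation by `ENNReal.ofReal` it is also lower
semicontinuous at `y`, where it takes its minimum `0` (Lean's `0 / 0 = 0`). Hence the global
slope is the supremum over all `y`, including `y = x`, of these truncated quotients, and suprema
of lower semicontinuous functions are lower semicontinuous.
-/

theorem IsLocalMin.lowerSemicontinuousAt {α β : Type*} [TopologicalSpace α] [Preorder β]
    {f : α → β} {x : α} (hf : IsLocalMin f x) : LowerSemicontinuousAt f x :=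
  fun _ hc => hf.mono fun _ hz => hc.trans_le hz

theorem LowerSemicontinuousAt.div_of_continuousAt {α : Type*} [TopologicalSpace α]
    {f g : α → ℝ} {x : α} (hf : LowerSemicontinuousAt f x) (hg : ContinuousAt g x)
    (hgx : 0 < g x) : LowerSemicontinuousAt (fun z => f z / g z) x := by
  intro t ht
  have hsub : LowerSemicontinuousAt (fun z => f z + -t * g z) x :=
    hf.add (hg.const_mul (-t)).lowerSemicontinuousAt
  have hsub_pos : 0 < f x + -t * g x := by linarith [(lt_div_iff₀ hgx).1 ht]
  filter_upwards [hsub 0 hsub_pos, continuousAt_const.eventually_lt hg hgx] with z hz hgz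
  exact (lt_div_iff₀ hgz).2 (by linarith)

section MetricSpace

variable {X : Type*} [MetricSpace X]

theorem gslope_eq_iSup (u : X → ℝ) (x : X) :
    gslope u x = ⨆ y, ENNReal.ofReal ((u x - u y) / dist x y) := by
  refine iSup_congr fun y => ?_
  rcases eq_or_ne y x with rfl | hyx
  · simp
  · simp [hyx]

theorem LowerSemicontinuous.ofReal_div_dist {u : X → ℝ} (hu : LowerSemicontinuous u) (y : X) :
    LowerSemicontinuous fun x => ENNReal.ofReal ((u x - u y) / dist x y) := by
  intro x
  rcases eq_or_ne x y with rfl | hxy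
  · exact IsLocalMin.lowerSemicontinuousAt (Eventually.of_forall fun z => by simp)
  · have hquot : LowerSemicontinuousAt (fun z => (u z - u y) / dist z y) x := by
      refine LowerSemicontinuousAt.div_of_continuousAt ?_
        (continuous_id.dist continuous_const).continuousAt (dist_pos.2 hxy)
      simpa only [sub_eq_add_neg] using
        (hu.lowerSemicontinuousAt x).add (lowerSemicontinuousAt_const (z := -u y))
    exact ENNReal.continuous_ofReal.continuousAt.comp_lowerSemicontinuousAt hquot
      ENNReal.ofReal_mono

end MetricSpace

/-- The global slope of a lower semicontinuous real-valued function is lower semicontinuous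
as a function with values in `[0, ∞]`. -/
theorem lowerSemicontinuous_gslope {X : Type*} [MetricSpace X]
    (u : X → ℝ) (hu : LowerSemicontinuous u) :
    LowerSemicontinuous (gslope u) := by
  rw [funext (gslope_eq_iSup u)]
  exact lowerSemicontinuous_iSup hu.ofReal_div_dist
end

section
/- Let X be a complete metric space and u : X → ℝ be a lower semicontinuous function bounded from below. Then inf_{x ∈ X} G[u](x) = 0. -/
/-!
Weak Ekeland principle: for every `ε > 0` there is a point `x` with `u x < u y + ε * dist x y`
for all `y ≠ x`, hence `G[u](x) ≤ ε`. Such a point is found as the limit of a sequence in which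
each `x (n+1)` descends from `x n` (`u` drops by at least `ε` times the distance) and nearly
minimises `u` among all points descending from `x n`. Then everything descending from `x (n+1)`
lies within `1 / (n+1)` of it, so the sequence is Cauchy, and by lower semicontinuity its limit
descends from every `x n`, which leaves no room for another point descending from the limit.
-/

open Filter Topology ENNReal

open Metric

section Descent

variable {X : Type*} [MetricSpace X] {u : X → ℝ} {ε : ℝ} {x y : X}

def descentSet (u : X → ℝ) (ε : ℝ) (x : X) : Set X := {y | u y + ε * dist x y ≤ u x}

theorem mem_descentSet : y ∈ descentSet u ε x ↔ u y + ε * dist x y ≤ u x := Iff.rfl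

theorem mem_descentSet_self : x ∈ descentSet u ε x := by
  simp [mem_descentSet]

theorem descentSet_subset_of_mem (hε : 0 ≤ ε) (hy : y ∈ descentSet u ε x) :
    descentSet u ε y ⊆ descentSet u ε x := fun z hz => by
  have := mul_le_mul_of_nonneg_left (dist_triangle x y z) hε
  rw [mem_descentSet] at hy hz ⊢
  linarith

theorem isClosed_descentSet (hu : LowerSemicontinuous u) : IsClosed (descentSet u ε x) :=
  (hu.add (continuous_const.mul (continuous_const.dist continuous_id)).lowerSemicontinuous)
    |>.isClosed_preimage (u x)

theorem exists_descentSet_subset_closedBall (hb : BddBelow (Set.range u)) (hε : 0 < ε) (x : X)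
    {r : ℝ} (hr : 0 < r) : ∃ y ∈ descentSet u ε x, descentSet u ε y ⊆ closedBall y r := by
  have hbdd : BddBelow (u '' descentSet u ε x) := hb.mono (Set.image_subset_range _ _)
  obtain ⟨_, ⟨y, hy, rfl⟩, hy_min⟩ : ∃ a ∈ u '' descentSet u ε x,
      a < sInf (u '' descentSet u ε x) + ε * r := exists_lt_of_csInf_lt
    (Set.image_nonempty.2 ⟨x, mem_descentSet_self⟩) (lt_add_of_pos_right _ (mul_pos hε hr))
  refine ⟨y, hy, fun z hz => ?_⟩
  have hz_inf := csInf_le hbdd ⟨z, descentSet_subset_of_mem hε.le hy hz, rfl⟩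
  rw [mem_descentSet] at hz
  rw [mem_closedBall, dist_comm, ← mul_le_mul_iff_of_pos_left hε]
  linarith

theorem exists_seq_descentSet_subset_closedBall [Nonempty X] (hb : BddBelow (Set.range u))
    (hε : 0 < ε) : ∃ x : ℕ → X, (∀ n, x (n + 1) ∈ descentSet u ε (x n)) ∧
      ∀ n, descentSet u ε (x n) ⊆ closedBall (x n) (1 / (n + 1)) := by
  have step (n : ℕ) (x : X) :=
    exists_descentSet_subset_closedBall hb hε x (r := 1 / (n + 1)) Nat.one_div_pos_of_nat
  choose next next_mem next_subset using step
  let x : ℕ → X := fun n => Nat.rec (next 0 (Classical.arbitrary X)) (fun n y => next (n + 1) y) n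
  refine ⟨x, fun n => next_mem (n + 1) (x n), ?_⟩
  rintro (_ | n)
  exacts [next_subset 0 _, next_subset (n + 1) (x n)]

theorem exists_descentSet_subset_singleton [CompleteSpace X] [Nonempty X]
    (hu : LowerSemicontinuous u) (hb : BddBelow (Set.range u)) (hε : 0 < ε) :
    ∃ a, descentSet u ε a ⊆ {a} := by
  obtain ⟨x, hx_succ, hx_ball⟩ := exists_seq_descentSet_subset_closedBall hb hε
  have dist_le {n : ℕ} {y z : X} (hy : y ∈ descentSet u ε (x n))
      (hz : z ∈ descentSet u ε (x n)) : dist y z ≤ 2 * (1 / (n + 1)) := by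
    have := mem_closedBall'.1 (hx_ball n hy)
    have := mem_closedBall'.1 (hx_ball n hz)
    linarith [dist_triangle y (x n) z, dist_comm y (x n)]
  have hx_mem {n m : ℕ} (hnm : n ≤ m) : x m ∈ descentSet u ε (x n) := by
    induction m, hnm using Nat.le_induction with
    | base => exact mem_descentSet_self
    | succ m _ ih => exact descentSet_subset_of_mem hε.le ih (hx_succ m)
  have h_lim : Tendsto (fun n : ℕ => 2 * (1 / ((n : ℝ) + 1))) atTop (𝓝 0) := by
    simpa using tendsto_one_div_add_atTop_nhds_zero_nat.const_mul (2 : ℝ)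
  obtain ⟨a, ha⟩ := cauchySeq_tendsto_of_complete <|
    cauchySeq_of_le_tendsto_0 _ (fun n m N hn hm => dist_le (hx_mem hn) (hx_mem hm)) h_lim
  have ha_mem (n : ℕ) : a ∈ descentSet u ε (x n) :=
    (isClosed_descentSet hu).mem_of_tendsto ha (eventually_atTop.2 ⟨n, fun _ => hx_mem⟩)
  refine ⟨a, fun y hy => dist_le_zero.1 <| ge_of_tendsto' h_lim fun n => ?_⟩
  exact dist_le (descentSet_subset_of_mem hε.le (ha_mem n) hy) (ha_mem n)

end Descent

theorem gslope_le_ofReal {X : Type*} [MetricSpace X] {u : X → ℝ} {x : X} {c : ℝ}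
    (h : ∀ y ≠ x, u x - u y ≤ c * dist x y) : gslope u x ≤ ENNReal.ofReal c :=
  iSup₂_le fun y hy => ENNReal.ofReal_le_ofReal <|
    (div_le_iff₀ (dist_pos.2 hy.symm)).2 (h y hy)

/-- On a complete (nonempty) metric space, a lower semicontinuous function bounded from below
has `inf_X G[u] = 0`. -/
theorem iInf_gslope_eq_zero {X : Type*} [MetricSpace X] [CompleteSpace X] [Nonempty X]
    (u : X → ℝ) (hu : LowerSemicontinuous u) (hb : BddBelow (Set.range u)) :
    ⨅ x, gslope u x = 0 := by
  refine le_antisymm (ENNReal.le_of_forall_pos_le_add fun ε hε _ => ?_) bot_le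
  obtain ⟨x, hx⟩ := exists_descentSet_subset_singleton hu hb (NNReal.coe_pos.2 hε)
  have hx_slope : ∀ y ≠ x, u x - u y ≤ ε * dist x y := fun y hy => by
    have : y ∉ descentSet u ε x := fun h => hy (hx h)
    rw [mem_descentSet, not_le] at this
    linarith
  calc ⨅ x, gslope u x ≤ gslope u x := iInf_le _ x
    _ ≤ ENNReal.ofReal ε := gslope_le_ofReal hx_slope
    _ = 0 + ε := by rw [ENNReal.ofReal_coe_nnreal, zero_add]
end

section
/- Let X be a complete metric space and u : X → ℝ ∪ {+∞} a proper lsc function bounded from below. Then there exists a sequence (z_n) in X with lim_{n→∞} G[u](z_n) = 0 and ∑_{n=0}^∞ G[u](z_n) · d(z_n, z_{n+1}) < +∞. -/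
/-!
Apply Ekeland's variational principle with slopes `s n = 2⁻ⁿ`, each time starting from the point
produced by the previous step. The new point `w (n+1)` satisfies `u (w (n+1)) ≤ u y + s n d(w (n+1), y)`
for every `y`, so its global slope is at most `s n`; and the descent inequality
`u (w (n+2)) + s (n+1) d(w (n+1), w (n+2)) ≤ u (w (n+1))` bounds the `n`-th term of the series by
`2 (u (w (n+1)) - u (w (n+2)))`, so the series telescopes and is dominated by `2 (u (w 1) - inf u)`.
-/

open Filter Topology ENNReal

/-- The global slope of a function `u : X → ℝ ∪ {+∞}` (encoded as `X → EReal`):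
`G[u](x) = sup_{y ≠ x} (u x - u y)⁺ / d(x,y)` when `u x < +∞`, and `+∞` when `u x = +∞`.
(It is meant to be used for functions that never take the value `⊥`.) -/
noncomputable def gslopeE {X : Type*} [MetricSpace X] (u : X → EReal) (x : X) : ℝ≥0∞ :=
  if u x = ⊤ then ⊤
  else ⨆ (y : X) (_ : y ≠ x), ENNReal.ofReal ((u x - u y).toReal / dist x y)

open Set Metric

section Ekeland

variable {X : Type*} [MetricSpace X] {f : X → ℝ} {s : ℝ} {x y : X}

def ekelandSet (f : X → ℝ) (s : ℝ) (x : X) : Set X := {y | f y + s * dist x y ≤ f x}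

lemma self_mem_ekelandSet : x ∈ ekelandSet f s x := by
  simp [ekelandSet]

lemma ekelandSet_subset (hs : 0 ≤ s) (hy : y ∈ ekelandSet f s x) :
    ekelandSet f s y ⊆ ekelandSet f s x := fun w hw => by
  have := mul_le_mul_of_nonneg_left (dist_triangle x y w) hs
  simp only [ekelandSet, mem_ofPred_eq] at hy hw ⊢
  linarith

lemma isClosed_ekelandSet (hf : LowerSemicontinuous f) (x : X) :
    IsClosed (ekelandSet f s x) :=
  (hf.add ((continuous_const.dist continuous_id).const_mul s).lowerSemicontinuous).isClosed_preimage
    (f x)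

lemma exists_mem_ekelandSet_subset_closedBall (hbdd : BddBelow (range f)) (hs : 0 < s) (x : X)
    {r : ℝ} (hr : 0 < r) : ∃ y ∈ ekelandSet f s x, ekelandSet f s y ⊆ closedBall y r := by
  obtain ⟨_, ⟨y, hyx, rfl⟩, hy⟩ :=
    Real.lt_sInf_add_pos ⟨f x, mem_image_of_mem f self_mem_ekelandSet⟩ (mul_pos hs hr)
  refine ⟨y, hyx, fun w hw => ?_⟩
  have hinf : sInf (f '' ekelandSet f s x) ≤ f w :=
    csInf_le (hbdd.mono (image_subset_range _ _))
      (mem_image_of_mem f (ekelandSet_subset hs.le hyx hw))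
  have : s * dist y w ≤ s * r := by
    simp only [ekelandSet, mem_ofPred_eq] at hw
    linarith
  rw [mem_closedBall, dist_comm]
  exact le_of_mul_le_mul_left this hs

/-- Ekeland's variational principle. Successive near-minimisers `x n` of `f` on the nested closed
sets `ekelandSet f s (x n)` make these sets shrink to a single point `z`, and
`ekelandSet f s z = {z}` is the conclusion. -/
theorem exists_mem_ekelandSet_forall_le_add_dist [CompleteSpace X] (hf : LowerSemicontinuous f)
    (hbdd : BddBelow (range f)) (hs : 0 < s) (x₀ : X) :
    ∃ z ∈ ekelandSet f s x₀, ∀ y, f z ≤ f y + s * dist z y := by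
  choose g hgS hgball using fun (n : ℕ) x =>
    exists_mem_ekelandSet_subset_closedBall hbdd hs x (Nat.one_div_pos_of_nat (n := n))
  let x : ℕ → X := fun n => Nat.rec x₀ (fun n xn => g n xn) n
  let T : ℕ → Set X := fun n => ekelandSet f s (x (n + 1))
  have hT_anti : Antitone T := antitone_nat_of_succ_le fun n => ekelandSet_subset hs.le (hgS _ _)
  have hT_ball : ∀ n, T n ⊆ closedBall (x (n + 1)) (1 / (n + 1)) := fun n => hgball _ _
  obtain ⟨z, hz⟩ : (⋂ n, T n).Nonempty := by
    refine nonempty_iInter_of_nonempty_biInter (fun n => isClosed_ekelandSet hf _)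
      (fun n => isBounded_closedBall.subset (hT_ball n))
      (fun N => ⟨x (N + 1), mem_iInter₂.2 fun n hn => hT_anti hn self_mem_ekelandSet⟩) ?_
    refine squeeze_zero (fun n => diam_nonneg) (fun n => ?_)
      (tendsto_one_div_add_atTop_nhds_zero_nat.const_mul 2 |>.trans (by simp))
    exact (diam_mono (hT_ball n) isBounded_closedBall).trans (diam_closedBall (by positivity))
  rw [mem_iInter] at hz
  have hzS : ∀ y ∈ ekelandSet f s z, y = z := fun y hy => by
    refine eq_of_forall_dist_le fun ε hε => ?_
    obtain ⟨n, hn⟩ := exists_nat_one_div_lt (half_pos hε)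
    have hyT : y ∈ closedBall (x (n + 1)) (1 / (n + 1)) :=
      hT_ball n (ekelandSet_subset hs.le (hz n) hy)
    have hzT : z ∈ closedBall (x (n + 1)) (1 / (n + 1)) := hT_ball n (hz n)
    linarith [dist_triangle_right y z (x (n + 1)), mem_closedBall.1 hyT, mem_closedBall.1 hzT]
  refine ⟨z, ekelandSet_subset hs.le (hgS 0 x₀) (hz 0), fun y => ?_⟩
  by_cases hy : y ∈ ekelandSet f s z
  · simp [hzS y hy]
  · simp only [ekelandSet, mem_ofPred_eq, not_le] at hy
    exact hy.le

theorem exists_seq_ekeland [CompleteSpace X] [Nonempty X] (hf : LowerSemicontinuous f)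
    (hbdd : BddBelow (range f)) {s : ℕ → ℝ} (hs : ∀ n, 0 < s n) :
    ∃ w : ℕ → X, ∀ n, f (w (n + 1)) + s n * dist (w n) (w (n + 1)) ≤ f (w n) ∧
      ∀ y, f (w (n + 1)) ≤ f y + s n * dist (w (n + 1)) y := by
  choose g hg using fun n x => exists_mem_ekelandSet_forall_le_add_dist hf hbdd (hs n) x
  let w : ℕ → X := fun n => Nat.rec (Classical.arbitrary X) (fun n wn => g n wn) n
  exact ⟨w, fun n => hg n (w n)⟩

end Ekeland

lemma lowerSemicontinuous_ereal_toReal {X : Type*} [TopologicalSpace X] {u : X → EReal}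
    (hu : LowerSemicontinuous u) (htop : ∀ x, u x ≠ ⊤) (hbot : ∀ x, u x ≠ ⊥) :
    LowerSemicontinuous fun x => (u x).toReal := fun x c hc => by
  have hcoe : ∀ x, ((u x).toReal : EReal) = u x := fun x => EReal.coe_toReal (htop x) (hbot x)
  have hc' : (c : EReal) < u x := by rw [← hcoe]; exact_mod_cast hc
  filter_upwards [hu x c hc'] with y hy
  rw [← hcoe] at hy
  exact_mod_cast hy

/-- On the closed sublevel set `{u ≤ u x₀}` the function `u` is real-valued, so the real version
applies there; points outside it cannot violate the slope inequality. -/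
theorem exists_seq_ekeland_ereal {X : Type*} [MetricSpace X] [CompleteSpace X] {u : X → EReal}
    (hu : LowerSemicontinuous u) {x₀ : X} (hx₀ : u x₀ ≠ ⊤) {m : ℝ} (hm : ∀ x, (m : EReal) ≤ u x)
    {s : ℕ → ℝ} (hs : ∀ n, 0 < s n) :
    ∃ w : ℕ → X, (∀ n, u (w n) ≠ ⊤) ∧ (∀ n, m ≤ (u (w n)).toReal) ∧ ∀ n,
      (u (w (n + 1))).toReal + s n * dist (w n) (w (n + 1)) ≤ (u (w n)).toReal ∧
      ∀ y, u (w (n + 1)) ≤ u y + ((s n * dist (w (n + 1)) y : ℝ) : EReal) := by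
  let Y := u ⁻¹' Iic (u x₀)
  have : CompleteSpace Y := (hu.isClosed_preimage (u x₀)).completeSpace_coe
  have : Nonempty Y := ⟨⟨x₀, show u x₀ ≤ u x₀ from le_rfl⟩⟩
  have htop (y : Y) : u y ≠ ⊤ := ne_top_of_le_ne_top hx₀ y.2
  have hbot (y : Y) : u y ≠ ⊥ := ne_bot_of_le_ne_bot (EReal.coe_ne_bot m) (hm y)
  have hcoe (y : Y) : ((u y).toReal : EReal) = u y := EReal.coe_toReal (htop y) (hbot y)
  have hmY (y : Y) : m ≤ (u y).toReal := by
    have := hm y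
    rw [← hcoe] at this
    exact_mod_cast this
  obtain ⟨w, hw⟩ := exists_seq_ekeland
    (lowerSemicontinuous_ereal_toReal (hu.comp continuous_subtype_val) htop hbot)
    ⟨m, forall_mem_range.2 hmY⟩ hs
  refine ⟨fun n => w n, fun n => htop _, fun n => hmY _, fun n => ⟨(hw n).1, fun y => ?_⟩⟩
  by_cases hy : u y ≤ u x₀
  · rw [← hcoe, ← hcoe ⟨y, hy⟩, ← EReal.coe_add]
    exact_mod_cast (hw n).2 ⟨y, hy⟩
  · exact ((w (n + 1)).2.trans (not_le.1 hy).le).trans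
      (le_add_of_nonneg_right (EReal.coe_nonneg.2 (mul_nonneg (hs n).le dist_nonneg)))

lemma EReal.toReal_sub_le {a b : EReal} {c : ℝ} (hc : 0 ≤ c) (h : a ≤ b + c) :
    (a - b).toReal ≤ c := by
  induction a using EReal.rec <;> induction b using EReal.rec <;> try simp_all
  rw [← EReal.coe_sub, EReal.toReal_coe]
  norm_cast at h
  linarith

lemma gslopeE_le_ofReal {X : Type*} [MetricSpace X] {u : X → EReal} {x : X} {s : ℝ}
    (hx : u x ≠ ⊤) (hs : 0 ≤ s) (h : ∀ y, u x ≤ u y + ((s * dist x y : ℝ) : EReal)) :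
    gslopeE u x ≤ ENNReal.ofReal s := by
  rw [gslopeE, if_neg hx]
  refine iSup₂_le fun y hy => ENNReal.ofReal_le_ofReal ?_
  rw [div_le_iff₀ (dist_pos.2 hy.symm)]
  exact EReal.toReal_sub_le (by positivity) (h y)

lemma tsum_ofReal_sub_succ_lt_top {a : ℕ → ℝ} (ha : Antitone a) (hbdd : BddBelow (range a)) :
    ∑' n, ENNReal.ofReal (a n - a (n + 1)) < ⊤ := by
  obtain ⟨m, hm⟩ := hbdd
  refine (ENNReal.tsum_le_of_sum_range_le (c := ENNReal.ofReal (a 0 - m)) fun N => ?_).trans_lt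
    ofReal_lt_top
  rw [← ENNReal.ofReal_sum_of_nonneg fun n _ => sub_nonneg.2 (ha n.le_succ),
    Finset.sum_range_sub']
  exact ENNReal.ofReal_le_ofReal (by linarith [hm (mem_range_self N)])

lemma tsum_mul_edist_lt_top_of_descent {X : Type*} [PseudoMetricSpace X] {z : ℕ → X}
    {g : ℕ → ℝ≥0∞} {s a : ℕ → ℝ} (hs : ∀ n, 0 ≤ s n) (ha : BddBelow (range a))
    (hg : ∀ n, g n ≤ ENNReal.ofReal (s n))
    (hdesc : ∀ n, a (n + 1) + s n * dist (z n) (z (n + 1)) ≤ a n) :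
    ∑' n, g n * edist (z n) (z (n + 1)) < ⊤ := by
  have ha_anti : Antitone a := antitone_nat_of_succ_le fun n => by
    nlinarith [hdesc n, mul_nonneg (hs n) (dist_nonneg (x := z n) (y := z (n + 1)))]
  refine lt_of_le_of_lt (ENNReal.tsum_le_tsum fun n => ?_) (tsum_ofReal_sub_succ_lt_top ha_anti ha)
  calc g n * edist (z n) (z (n + 1))
      ≤ ENNReal.ofReal (s n) * ENNReal.ofReal (dist (z n) (z (n + 1))) := by
        rw [edist_dist]; exact mul_le_mul_left (hg n) _
    _ = ENNReal.ofReal (s n * dist (z n) (z (n + 1))) := (ENNReal.ofReal_mul (hs n)).symm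
    _ ≤ ENNReal.ofReal (a n - a (n + 1)) := ENNReal.ofReal_le_ofReal (by linarith [hdesc n])

/-- On a complete metric space, for a proper lsc function `u : X → ℝ ∪ {+∞}` bounded from
below, there is a sequence `(z_n)` with `G[u](z_n) → 0` and
`∑ G[u](z_n) d(z_n, z_{n+1}) < ∞`. -/
theorem exists_seq_gslope_tendsto_zero_tsum_lt_top {X : Type*} [MetricSpace X]
    [CompleteSpace X] (u : X → EReal)
    (hlsc : LowerSemicontinuous u)
    (hproper : ∃ x, u x ≠ ⊤)
    (hbdd : ∃ m : ℝ, ∀ x, (m : EReal) ≤ u x) :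
    ∃ z : ℕ → X, Tendsto (fun n => gslopeE u (z n)) atTop (𝓝 0) ∧
      ∑' n, gslopeE u (z n) * edist (z n) (z (n + 1)) < ⊤ := by
  obtain ⟨x₀, hx₀⟩ := hproper
  obtain ⟨m, hm⟩ := hbdd
  obtain ⟨w, hw_top, hw_ge, hw⟩ := exists_seq_ekeland_ereal hlsc hx₀ hm
    (s := fun n => (1 / 2 : ℝ) ^ n) fun n => by positivity
  have hslope (n : ℕ) : gslopeE u (w (n + 1)) ≤ ENNReal.ofReal ((1 / 2) ^ n) :=
    gslopeE_le_ofReal (hw_top _) (by positivity) (hw n).2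
  have hs_lim : Tendsto (fun n : ℕ => ENNReal.ofReal ((1 / 2) ^ n)) atTop (𝓝 0) := by
    simpa using ENNReal.tendsto_ofReal (tendsto_pow_atTop_nhds_zero_of_lt_one (by norm_num)
      (by norm_num : (1 / 2 : ℝ) < 1))
  refine ⟨fun n => w (n + 1),
    tendsto_of_tendsto_of_tendsto_of_le_of_le tendsto_const_nhds hs_lim (fun n => zero_le) hslope,
    tsum_mul_edist_lt_top_of_descent (a := fun n => 2 * (u (w (n + 1))).toReal)
      (fun n => by positivity) ⟨2 * m, forall_mem_range.2 fun n => by linarith [hw_ge (n + 1)]⟩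
      hslope fun n => ?_⟩
  have := (hw (n + 1)).1
  rw [pow_succ] at this
  linarith
end

section
/- Let X be a metric space and u : X → ℝ ∪ {+∞} a proper function with inf_X u finite. If a sequence (x_n) in X satisfies lim_{n→∞} G[u](x_n) = 0 and ∑_{n=0}^∞ G[u](x_{n+1})·d(x_n, x_{n+1}) < +∞, then liminf_{n→∞} u(x_n) = inf_X u. -/
open Filter Topology ENNReal

lemma le_add_gslopeE_mul_dist {X : Type*} [MetricSpace X] {u : X → EReal} (hbot : ∀ x, u x ≠ ⊥)
    {x : X} (hx : gslopeE u x ≠ ⊤) (y : X) :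
    u x ≤ u y + ((gslopeE u x).toReal * dist x y : ℝ) := by
  have hux : u x ≠ ⊤ := fun h => hx (by simp [gslopeE, h])
  rcases eq_or_ne (u y) ⊤ with hy | hy
  · rw [hy, EReal.top_add_coe]
    exact le_top
  rcases eq_or_ne y x with rfl | hne
  · simp
  have hdist : 0 < dist x y := dist_pos.mpr hne.symm
  have hquot : ENNReal.ofReal ((u x - u y).toReal / dist x y) ≤ gslopeE u x := by
    rw [gslopeE, if_neg hux]
    exact le_iSup₂ (f := fun y (_ : y ≠ x) => ENNReal.ofReal ((u x - u y).toReal / dist x y)) y hne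
  have hreal : (u x).toReal - (u y).toReal ≤ (gslopeE u x).toReal * dist x y := by
    rw [← EReal.toReal_sub hux (hbot x) hy (hbot y), ← div_le_iff₀ hdist]
    calc _ ≤ max ((u x - u y).toReal / dist x y) 0 := le_max_left _ _
      _ = (ENNReal.ofReal ((u x - u y).toReal / dist x y)).toReal := toReal_ofReal'.symm
      _ ≤ _ := toReal_mono hx hquot
  rw [← EReal.coe_toReal hux (hbot x), ← EReal.coe_toReal hy (hbot y), ← EReal.coe_add,
    EReal.coe_le_coe_iff]
  linarith

lemma le_mul_exp_of_sub_le_mul {a b e : ℝ} (ha : 0 ≤ a) (hb : 0 ≤ b) (he₀ : 0 ≤ e)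
    (he : e ≤ 1 / 2) (h : b - a ≤ e * b) : b ≤ a * Real.exp (2 * e) := by
  -- `(1 - e) (1 + 2e) = 1 + e (1 - 2e) ≥ 1`
  have hgap : 0 ≤ b * (e * (1 - 2 * e)) := mul_nonneg hb (mul_nonneg he₀ (by linarith))
  calc b ≤ a * (1 + 2 * e) := by nlinarith
    _ ≤ a * Real.exp (2 * e) := by gcongr; linarith [Real.add_one_le_exp (2 * e)]

lemma le_mul_exp_sum_of_sub_le_mul_succ {r e : ℕ → ℝ} (hr : ∀ n, 0 ≤ r n) (he₀ : ∀ n, 0 ≤ e n)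
    (he : ∀ n, e n ≤ 1 / 2) (h : ∀ n, r (n + 1) - r n ≤ e n * r (n + 1)) (n : ℕ) :
    r n ≤ r 0 * Real.exp (2 * ∑ k ∈ Finset.range n, e k) := by
  induction n with
  | zero => simp
  | succ n ih =>
    calc r (n + 1) ≤ r n * Real.exp (2 * e n) :=
          le_mul_exp_of_sub_le_mul (hr n) (hr (n + 1)) (he₀ n) (he n) (h n)
      _ ≤ r 0 * Real.exp (2 * ∑ k ∈ Finset.range n, e k) * Real.exp (2 * e n) := by gcongr
      _ = r 0 * Real.exp (2 * ∑ k ∈ Finset.range (n + 1), e k) := by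
          rw [Finset.sum_range_succ, mul_add, Real.exp_add, mul_assoc]

lemma isBoundedUnder_le_of_sub_le_mul_succ {r e : ℕ → ℝ} (hr : ∀ n, 0 ≤ r n)
    (he₀ : ∀ n, 0 ≤ e n) (he : Summable e)
    (h : ∀ᶠ n in atTop, r (n + 1) - r n ≤ e n * r (n + 1)) :
    IsBoundedUnder (· ≤ ·) atTop r := by
  have hsmall : ∀ᶠ n in atTop, e n ≤ 1 / 2 :=
    he.tendsto_atTop_zero.eventually_le_const (by norm_num)
  obtain ⟨N, hN⟩ := eventually_atTop.mp (h.and hsmall)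
  refine isBoundedUnder_of_eventually_le (a := r N * Real.exp (2 * ∑' k, e (k + N)))
    (eventually_atTop.mpr ⟨N, fun n hn => ?_⟩)
  obtain ⟨k, rfl⟩ := Nat.exists_eq_add_of_le' hn
  calc r (k + N) ≤ r (0 + N) * Real.exp (2 * ∑ j ∈ Finset.range k, e (j + N)) :=
        le_mul_exp_sum_of_sub_le_mul_succ (r := fun j => r (j + N)) (fun _ => hr _)
          (fun _ => he₀ _) (fun j => (hN (j + N) (by omega)).2)
          (fun j => by simpa [add_right_comm] using (hN (j + N) (by omega)).1) k
    _ ≤ r N * Real.exp (2 * ∑' j, e (j + N)) := by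
        rw [zero_add]
        gcongr
        · exact hr N
        · exact ((summable_nat_add_iff N).mpr he).sum_le_tsum _ (fun j _ => he₀ _)

lemma liminf_le_of_tendsto_gslopeE {X : Type*} [MetricSpace X] {u : X → EReal}
    (hbot : ∀ x, u x ≠ ⊥) {x : ℕ → X} (h1 : Tendsto (fun n => gslopeE u (x n)) atTop (𝓝 0))
    (h2 : ∑' n, gslopeE u (x (n + 1)) * edist (x n) (x (n + 1)) < ⊤) (y : X) :
    liminf (fun n => u (x n)) atTop ≤ u y := by
  by_contra! hlt
  obtain ⟨c, hyc, hcx⟩ := EReal.exists_between_coe_real hlt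
  obtain ⟨b, hb⟩ : ∃ b : ℝ, u y = b := ⟨_, (EReal.coe_toReal hyc.ne_top (hbot y)).symm⟩
  rw [hb, EReal.coe_lt_coe_iff] at hyc
  set δ := c - b
  have hδ : 0 < δ := sub_pos.mpr hyc
  set g : ℕ → ℝ := fun n => (gslopeE u (x n)).toReal
  set r : ℕ → ℝ := fun n => dist (x n) y
  have hg : Tendsto g atTop (𝓝 0) := by
    have := (tendsto_toReal zero_ne_top).comp h1
    rwa [toReal_zero] at this
  have hfar : ∀ᶠ n in atTop, δ ≤ g n * r n := by
    filter_upwards [eventually_lt_of_lt_liminf hcx, h1.eventually_ne zero_ne_top] with n hcn hfin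
    have := hcn.trans_le (le_add_gslopeE_mul_dist hbot hfin y)
    rw [hb, ← EReal.coe_add, EReal.coe_lt_coe_iff] at this
    linarith
  have hsum : Summable fun n => g (n + 1) * dist (x n) (x (n + 1)) := by
    simpa [toReal_mul, edist_dist] using ENNReal.summable_toReal h2.ne
  obtain ⟨C, hC⟩ := isBoundedUnder_le_of_sub_le_mul_succ
    (e := fun n => g (n + 1) * dist (x n) (x (n + 1)) / δ) (fun n => dist_nonneg)
    (fun n => by positivity) (hsum.div_const δ) <| by
      filter_upwards [(tendsto_add_atTop_nat 1).eventually hfar] with n hn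
      calc r (n + 1) - r n ≤ dist (x n) (x (n + 1)) := by
            linarith [dist_triangle (x (n + 1)) (x n) y, dist_comm (x n) (x (n + 1))]
        _ ≤ g (n + 1) * dist (x n) (x (n + 1)) / δ * r (n + 1) := by
            rw [div_mul_eq_mul_div, le_div_iff₀ hδ]
            nlinarith [mul_le_mul_of_nonneg_left hn (dist_nonneg (x := x n) (y := x (n + 1)))]
  have hgr : Tendsto (fun n => g n * r n) atTop (𝓝 0) := by
    refine tendsto_of_tendsto_of_tendsto_of_le_of_le' tendsto_const_nhds
      (by simpa using hg.mul_const C) (Eventually.of_forall fun n => ?_) ?_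
    · exact mul_nonneg toReal_nonneg dist_nonneg
    · filter_upwards [hC] with n hn
      exact mul_le_mul_of_nonneg_left hn toReal_nonneg
  linarith [ge_of_tendsto hgr hfar]

theorem liminf_eq_iInf_of_gslope_seq_general {X : Type*} [MetricSpace X]
    (u : X → EReal) (hbot : ∀ x, u x ≠ ⊥)
    (x : ℕ → X)
    (h1 : Tendsto (fun n => gslopeE u (x n)) atTop (𝓝 0))
    (h2 : ∑' n, gslopeE u (x (n + 1)) * edist (x n) (x (n + 1)) < ⊤) :
    Filter.liminf (fun n => u (x n)) atTop = ⨅ y, u y :=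
  le_antisymm (le_iInf (liminf_le_of_tendsto_gslopeE hbot h1 h2))
    (le_liminf_of_le (by isBoundedDefault) (Eventually.of_forall fun n => iInf_le _ _))

/-- If `u : X → ℝ ∪ {+∞}` is proper with finite infimum and a sequence `(x_n)` satisfies
`G[u](x_n) → 0` and `∑ G[u](x_{n+1}) d(x_n, x_{n+1}) < ∞`, then
`liminf u(x_n) = inf_X u`. -/
theorem liminf_eq_iInf_of_gslope_seq {X : Type*} [MetricSpace X]
    (u : X → EReal) (hbot : ∀ x, u x ≠ ⊥)
    (hproper : ∃ x, u x ≠ ⊤) (hinf : (⨅ x, u x) ≠ ⊥)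
    (x : ℕ → X)
    (h1 : Tendsto (fun n => gslopeE u (x n)) atTop (𝓝 0))
    (h2 : ∑' n, gslopeE u (x (n + 1)) * edist (x n) (x (n + 1)) < ⊤) :
    Filter.liminf (fun n => u (x n)) atTop = ⨅ y, u y :=
  liminf_eq_iInf_of_gslope_seq_general u hbot x h1 h2
end

section
/- Let λ ≥ 0, X a metric space, ℓ : X → [0,∞) lsc, and T the operator T u(x) = inf_y (u(y)+ℓ(x)d(x,y))/(1+λ d(x,y)). If u₀ : X → ℝ ∪ {+∞} is nonnegative, then the sequence u_n := Tⁿ u₀ is pointwise nonincreasing and converges pointwise to a function v : X → [0, ∞] satisfying T v = v. -/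
open Filter Topology ENNReal

/-- The global slope of a nonnegative extended-real valued function `u : X → [0, ∞]`:
`G[u](x) = sup_{y ≠ x} (u x - u y)⁺ / d(x,y)` when `u x < ∞` (truncated subtraction in
`ℝ≥0∞` is exactly the positive part), and `∞` when `u x = ∞`. -/
noncomputable def gslopeN {X : Type*} [MetricSpace X] (u : X → ℝ≥0∞) (x : X) : ℝ≥0∞ :=
  if u x = ⊤ then ⊤
  else ⨆ (y : X) (_ : y ≠ x), (u x - u y) / edist x y

/-- The operator `T u (x) = inf_y (u y + ℓ x · d(x,y)) / (1 + λ · d(x,y))` acting on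
nonnegative extended-real valued functions. -/
noncomputable def TopE {X : Type*} [MetricSpace X] (lam : ℝ) (ℓ : X → ℝ)
    (u : X → ℝ≥0∞) (x : X) : ℝ≥0∞ :=
  ⨅ y : X, (u y + ENNReal.ofReal (ℓ x) * edist x y) / (1 + ENNReal.ofReal lam * edist x y)

/-! The candidate `y = x` gives `T u ≤ u`, so the iterates decrease; and `T` commutes with
arbitrary infima, since each `a ↦ (a + ℓ x d(x,y)) / (1 + λ d(x,y))` does (the denominator is
finite and nonzero). Hence the pointwise limit `v = ⨅ n, Tⁿ u₀` satisfies
`T v = ⨅ n, Tⁿ⁺¹ u₀ = v`. -/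

section TopE

variable {X : Type*} [MetricSpace X] (lam : ℝ) (ℓ : X → ℝ)

theorem TopE_le_self (u : X → ℝ≥0∞) : TopE lam ℓ u ≤ u := fun x =>
  (iInf_le _ x).trans_eq (by simp)

theorem TopE_iInf {ι : Sort*} (u : ι → X → ℝ≥0∞) :
    TopE lam ℓ (⨅ i, u i) = ⨅ i, TopE lam ℓ (u i) := by
  funext x
  have hden_ne_zero (y : X) : 1 + ENNReal.ofReal lam * edist x y ≠ 0 := by simp
  have hden_ne_top (y : X) : 1 + ENNReal.ofReal lam * edist x y ≠ ∞ :=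
    add_ne_top.2 ⟨one_ne_top, mul_ne_top ofReal_ne_top (edist_ne_top x y)⟩
  simp only [TopE, iInf_apply, ENNReal.iInf_add,
    ENNReal.iInf_div_of_ne (hden_ne_zero _) (hden_ne_top _)]
  exact iInf_comm

end TopE

theorem iterates_antitone_tendsto_fixedPoint_general {X : Type*} [MetricSpace X]
    (lam : ℝ) (ℓ : X → ℝ)
    (u₀ : X → ℝ≥0∞) :
    (∀ x, Antitone (fun n => (TopE lam ℓ)^[n] u₀ x)) ∧
    ∃ v : X → ℝ≥0∞,
      (∀ x, Tendsto (fun n => (TopE lam ℓ)^[n] u₀ x) atTop (𝓝 (v x))) ∧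
      TopE lam ℓ v = v := by
  have hanti : Antitone fun n => (TopE lam ℓ)^[n] u₀ := fun _ _ hmn =>
    Function.antitone_iterate_of_le_id (TopE_le_self lam ℓ) hmn u₀
  refine ⟨fun x _ _ hmn => hanti hmn x, ⨅ n, (TopE lam ℓ)^[n] u₀, fun x => ?_, ?_⟩
  · simpa only [iInf_apply] using tendsto_atTop_iInf fun _ _ hmn => hanti hmn x
  · calc TopE lam ℓ (⨅ n, (TopE lam ℓ)^[n] u₀)
        = ⨅ n, (TopE lam ℓ)^[n + 1] u₀ := by
          simp only [TopE_iInf, Function.iterate_succ_apply']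
      _ = ⨅ n, (TopE lam ℓ)^[n] u₀ := hanti.iInf_comp_tendsto_atTop (tendsto_add_atTop_nat 1)

/-- For a nonnegative (extended-real valued) `u₀`, the iterates `Tⁿ u₀` are pointwise
nonincreasing and converge pointwise to a fixed point of `T`. -/
theorem iterates_antitone_tendsto_fixedPoint {X : Type*} [MetricSpace X]
    (lam : ℝ) (hlam : 0 ≤ lam) (ℓ : X → ℝ)
    (hℓ : LowerSemicontinuous ℓ) (hℓ0 : ∀ x, 0 ≤ ℓ x)
    (u₀ : X → ℝ≥0∞) :
    (∀ x, Antitone (fun n => (TopE lam ℓ)^[n] u₀ x)) ∧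
    ∃ v : X → ℝ≥0∞,
      (∀ x, Tendsto (fun n => (TopE lam ℓ)^[n] u₀ x) atTop (𝓝 (v x))) ∧
      TopE lam ℓ v = v :=
  iterates_antitone_tendsto_fixedPoint_general lam ℓ u₀
end

section
/- With the notation of the previous setting, the value u₀(x) = inf over sequences starting at x with ℓ(x_n) → 0 of ∑ ℓ(x_n)d(x_n,x_{n+1}) is unchanged if the infimum is restricted to sequences (x_n) for which (ℓ(x_n)) is strictly decreasing to 0. -/
/-!
Replace a sequence `σ` with `ℓ ∘ σ → 0` by its subsequence of record lows of `ℓ`: after each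
record index comes the first later index at which `ℓ` is not larger. Along it `ℓ` is antitone
and still tends to `0`. On the block of indices between two consecutive records `ℓ` is bounded
below by its value at the first record, so by the triangle inequality the jump between the two
records costs at most the corresponding block of the original series.
-/

open Filter Topology ENNReal

section RecordIdx

variable {α : Type*} [LinearOrder α] (a : ℕ → α)

open scoped Classical in
/-- Successive record-low indices of `a`; if no later value is `≤` the current record, the index
stays put from then on. -/
noncomputable def recordIdx : ℕ → ℕ
  | 0 => 0
  | k + 1 =>
    if h : ∃ n, recordIdx k < n ∧ a n ≤ a (recordIdx k) then Nat.find h else recordIdx k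

open scoped Classical in
lemma recordIdx_succ (k : ℕ) :
    recordIdx a (k + 1) =
      if h : ∃ n, recordIdx a k < n ∧ a n ≤ a (recordIdx a k) then Nat.find h
      else recordIdx a k :=
  rfl

lemma recordIdx_le_succ (k : ℕ) : recordIdx a k ≤ recordIdx a (k + 1) := by
  rw [recordIdx_succ]
  split_ifs with h
  · exact (Nat.find_spec h).1.le
  · rfl

lemma monotone_recordIdx : Monotone (recordIdx a) :=
  monotone_nat_of_le_succ (recordIdx_le_succ a)

lemma antitone_comp_recordIdx : Antitone (a ∘ recordIdx a) := by
  refine antitone_nat_of_succ_le fun k => ?_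
  simp only [Function.comp_apply, recordIdx_succ]
  split_ifs with h
  · exact (Nat.find_spec h).2
  · rfl

lemma recordIdx_lt_succ {k n : ℕ} (hn : recordIdx a k < n) (ha : a n ≤ a (recordIdx a k)) :
    recordIdx a k < recordIdx a (k + 1) := by
  have h : ∃ n, recordIdx a k < n ∧ a n ≤ a (recordIdx a k) := ⟨n, hn, ha⟩
  rw [recordIdx_succ, dif_pos h]
  exact (Nat.find_spec h).1

lemma apply_recordIdx_le_of_mem_Ico {k j : ℕ}
    (hj : j ∈ Finset.Ico (recordIdx a k) (recordIdx a (k + 1))) :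
    a (recordIdx a k) ≤ a j := by
  obtain ⟨hkj, hjk⟩ := Finset.mem_Ico.mp hj
  rcases hkj.eq_or_lt with rfl | hlt
  · rfl
  rw [recordIdx_succ] at hjk
  split_ifs at hjk with h
  · exact (not_le.mp fun hle => Nat.find_min h hjk ⟨hlt, hle⟩).le
  · omega

/-- If `a` tends to its lower bound `b`, so does `a` along the record lows: either some record
equals `b` and the records stay there, or every record exceeds `b` and the record indices are
strictly increasing. -/
lemma tendsto_comp_recordIdx [TopologicalSpace α] [OrderTopology α] {b : α}
    (hb : ∀ n, b ≤ a n) (ha : Tendsto a atTop (𝓝 b)) :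
    Tendsto (a ∘ recordIdx a) atTop (𝓝 b) := by
  by_cases hhit : ∃ k, a (recordIdx a k) = b
  · obtain ⟨k, hk⟩ := hhit
    refine tendsto_const_nhds.congr' ?_
    filter_upwards [eventually_ge_atTop k] with m hm
    exact le_antisymm (hb _) (hk ▸ antitone_comp_recordIdx a hm)
  · push Not at hhit
    have hstrict : StrictMono (recordIdx a) := strictMono_nat_of_lt_succ fun k => by
      have hpos : b < a (recordIdx a k) := (hb _).lt_of_ne' (hhit k)
      obtain ⟨n, hlt, hge⟩ :=
        ((ha.eventually_lt_const hpos).and (eventually_gt_atTop (recordIdx a k))).exists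
      exact recordIdx_lt_succ a hge hlt.le
    exact ha.comp hstrict.tendsto_atTop

end RecordIdx

section WeightedLength

variable {X : Type*} [PseudoEMetricSpace X] (w : ℕ → ℝ≥0∞) (σ : ℕ → X) {φ : ℕ → ℕ}

lemma mul_edist_le_sum_Ico {m n : ℕ} (hmn : m ≤ n) (hw : ∀ j ∈ Finset.Ico m n, w m ≤ w j) :
    w m * edist (σ m) (σ n) ≤ ∑ j ∈ Finset.Ico m n, w j * edist (σ j) (σ (j + 1)) :=
  calc w m * edist (σ m) (σ n)
      ≤ w m * ∑ j ∈ Finset.Ico m n, edist (σ j) (σ (j + 1)) := by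
        gcongr; exact edist_le_Ico_sum_edist σ hmn
    _ = ∑ j ∈ Finset.Ico m n, w m * edist (σ j) (σ (j + 1)) := Finset.mul_sum _ _ _
    _ ≤ ∑ j ∈ Finset.Ico m n, w j * edist (σ j) (σ (j + 1)) :=
        Finset.sum_le_sum fun j hj => by gcongr; exact hw j hj

lemma tsum_mul_edist_comp_le (hφ : Monotone φ)
    (hw : ∀ k, ∀ j ∈ Finset.Ico (φ k) (φ (k + 1)), w (φ k) ≤ w j) :
    ∑' k, w (φ k) * edist (σ (φ k)) (σ (φ (k + 1))) ≤
      ∑' n, w n * edist (σ n) (σ (n + 1)) := by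
  set f : ℕ → ℝ≥0∞ := fun n => w n * edist (σ n) (σ (n + 1))
  have hpartial : ∀ K, ∑ k ∈ Finset.range K, w (φ k) * edist (σ (φ k)) (σ (φ (k + 1))) ≤
      ∑ n ∈ Finset.range (φ K), f n := by
    intro K
    induction K with
    | zero => simp
    | succ K ih =>
      rw [Finset.sum_range_succ, ← Finset.sum_range_add_sum_Ico f (hφ K.le_succ)]
      exact add_le_add ih (mul_edist_le_sum_Ico w σ (hφ K.le_succ) (hw K))
  rw [ENNReal.tsum_eq_iSup_nat]
  exact iSup_le fun K => (hpartial K).trans (ENNReal.sum_le_tsum _)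

end WeightedLength

lemma exists_antitone_of_tendsto_zero {X : Type*} [PseudoEMetricSpace X] (ℓ : X → ℝ)
    (hℓ0 : ∀ x, 0 ≤ ℓ x) (σ : ℕ → X) (hσ : Tendsto (fun n => ℓ (σ n)) atTop (𝓝 0)) :
    ∃ τ : ℕ → X, τ 0 = σ 0 ∧ Antitone (fun n => ℓ (τ n)) ∧
      Tendsto (fun n => ℓ (τ n)) atTop (𝓝 0) ∧
      ∑' n, ENNReal.ofReal (ℓ (τ n)) * edist (τ n) (τ (n + 1)) ≤
        ∑' n, ENNReal.ofReal (ℓ (σ n)) * edist (σ n) (σ (n + 1)) := by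
  set a : ℕ → ℝ := fun n => ℓ (σ n)
  refine ⟨σ ∘ recordIdx a, rfl, antitone_comp_recordIdx a,
    tendsto_comp_recordIdx a (fun n => hℓ0 _) hσ, ?_⟩
  exact tsum_mul_edist_comp_le (fun n => ENNReal.ofReal (a n)) σ (monotone_recordIdx a)
    fun k j hj => ENNReal.ofReal_le_ofReal (apply_recordIdx_le_of_mem_Ico a hj)

theorem series_formula_decreasing_sequences_general {X : Type*} [MetricSpace X]
    (ℓ : X → ℝ)
    (hℓ0 : ∀ x, 0 ≤ ℓ x)
    (x : X) :
    (⨅ (σ : ℕ → X) (_ : σ 0 = x ∧ Tendsto (fun n => ℓ (σ n)) atTop (𝓝 0)),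
        ∑' n, ENNReal.ofReal (ℓ (σ n)) * edist (σ n) (σ (n + 1))) =
    ⨅ (σ : ℕ → X) (_ : σ 0 = x ∧ Antitone (fun n => ℓ (σ n)) ∧
        Tendsto (fun n => ℓ (σ n)) atTop (𝓝 0)),
      ∑' n, ENNReal.ofReal (ℓ (σ n)) * edist (σ n) (σ (n + 1)) := by
  refine le_antisymm (iInf₂_mono' fun τ hτ => ⟨τ, ⟨hτ.1, hτ.2.2⟩, le_rfl⟩) ?_
  refine iInf₂_mono' fun σ hσ => ?_
  obtain ⟨τ, hτ0, hτanti, hτlim, hτsum⟩ := exists_antitone_of_tendsto_zero ℓ hℓ0 σ hσ.2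
  exact ⟨τ, ⟨hτ0.trans hσ.1, hτanti, hτlim⟩, hτsum⟩

/-- The value `u₀(x)` is unchanged if the infimum is restricted to sequences along which
`ℓ` is decreasing (to `0`). -/
theorem series_formula_decreasing_sequences {X : Type*} [MetricSpace X]
    (ℓ : X → ℝ) (hℓ : LowerSemicontinuous ℓ)
    (hℓ0 : ∀ x, 0 ≤ ℓ x) (hinfℓ : ⨅ x, ℓ x = 0)
    (H0 : ∃ σ : ℕ → X, Tendsto (fun n => ℓ (σ n)) atTop (𝓝 0) ∧
      ∑' n, ENNReal.ofReal (ℓ (σ n)) * edist (σ n) (σ (n + 1)) < ⊤)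
    (x : X) :
    (⨅ (σ : ℕ → X) (_ : σ 0 = x ∧ Tendsto (fun n => ℓ (σ n)) atTop (𝓝 0)),
        ∑' n, ENNReal.ofReal (ℓ (σ n)) * edist (σ n) (σ (n + 1))) =
    ⨅ (σ : ℕ → X) (_ : σ 0 = x ∧ Antitone (fun n => ℓ (σ n)) ∧
        Tendsto (fun n => ℓ (σ n)) atTop (𝓝 0)),
      ∑' n, ENNReal.ofReal (ℓ (σ n)) * edist (σ n) (σ (n + 1)) :=
  series_formula_decreasing_sequences_general ℓ hℓ0 x
end

section
/- Let X be a compact metric space, λ > 0, and ℓ : X → [0,∞) a bounded lsc function with inf_X ℓ = 0. If u, v : X → ℝ are bounded lsc functions with inf_X u = inf_X v = 0 such that λ u + G[u] ≤ ℓ pointwise and λ v + G[v] ≥ ℓ pointwise, then u ≤ v on X. -/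
open Filter Topology ENNReal

/-!
A subsolution satisfies `u x - u y ≤ (ℓ x - λ u x) d(x, y)` for all `y`; as `ℓ` is bounded above
and the lsc `u` is bounded below on compact `X`, `u` is Lipschitz, so `v - u` is lower semicontinuous and attains its minimum at
some `z`. If `u z > v z`, then `G[v](z) ≥ ℓ z - λ v z > ℓ z - λ u z`, which yields `y` with
`v z - v y > (ℓ z - λ u z) d(z, y) ≥ u z - u y`, contradicting the minimality of `v - u` at `z`.
-/

namespace EReal

lemma ennreal_ne_top_of_coe_add_le {a L : ℝ} {g : ℝ≥0∞} (h : (a : EReal) + g ≤ L) : g ≠ ⊤ := by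
  rintro rfl
  rw [coe_ennreal_top, coe_add_top, top_le_iff] at h
  exact coe_ne_top L h

lemma add_toReal_le_of_coe_add_le {a L : ℝ} {g : ℝ≥0∞} (h : (a : EReal) + g ≤ L) :
    a + g.toReal ≤ L := by
  rw [← coe_ennreal_toReal (ennreal_ne_top_of_coe_add_le h)] at h
  exact_mod_cast h

lemma le_add_toReal_of_le_coe_add {a L : ℝ} {g : ℝ≥0∞} (hg : g ≠ ⊤) (h : (L : EReal) ≤ a + g) :
    L ≤ a + g.toReal := by
  rw [← coe_ennreal_toReal hg] at h
  exact_mod_cast h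

end EReal

section

variable {X : Type*} [MetricSpace X]

lemma sub_le_mul_dist_of_coe_add_gslope_le {u : X → ℝ} {x : X} {a L : ℝ}
    (h : (a : EReal) + gslope u x ≤ L) (y : X) : u x - u y ≤ (L - a) * dist x y := by
  rcases eq_or_ne y x with rfl | hyx
  · simp
  have hd : 0 < dist x y := dist_pos.2 hyx.symm
  have hslope : ENNReal.ofReal ((u x - u y) / dist x y) ≤ gslope u x :=
    le_iSup₂ (f := fun y (_ : y ≠ x) => ENNReal.ofReal ((u x - u y) / dist x y)) y hyx
  rw [ENNReal.ofReal_le_iff_le_toReal (EReal.ennreal_ne_top_of_coe_add_le h),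
    div_le_iff₀ hd] at hslope
  nlinarith [EReal.add_toReal_le_of_coe_add_le h]

lemma exists_mul_dist_lt_sub_of_le_coe_add_gslope {v : X → ℝ} {x : X} {a L c : ℝ}
    (h : (L : EReal) ≤ a + gslope v x) (hc : 0 ≤ c) (hcL : c < L - a) :
    ∃ y, c * dist x y < v x - v y := by
  have hlt : ENNReal.ofReal c < gslope v x := by
    rcases eq_or_ne (gslope v x) ⊤ with hG | hG
    · simp [hG]
    rw [ENNReal.ofReal_lt_iff_lt_toReal hc hG]
    linarith [EReal.le_add_toReal_of_le_coe_add hG h]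
  obtain ⟨y, hy⟩ := lt_iSup_iff.1 hlt
  obtain ⟨hyx, hy⟩ := lt_iSup_iff.1 hy
  rw [ENNReal.ofReal_lt_ofReal_iff', lt_div_iff₀ (dist_pos.2 (Ne.symm hyx))] at hy
  exact ⟨y, hy.1⟩

def IsSubsolution (lam : ℝ) (ℓ u : X → ℝ) : Prop :=
  ∀ x, ((lam * u x : ℝ) : EReal) + (gslope u x : EReal) ≤ (ℓ x : EReal)

def IsSupersolution (lam : ℝ) (ℓ v : X → ℝ) : Prop :=
  ∀ x, (ℓ x : EReal) ≤ ((lam * v x : ℝ) : EReal) + (gslope v x : EReal)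

namespace IsSubsolution

variable {lam : ℝ} {ℓ u v : X → ℝ}

lemma mul_le (hu : IsSubsolution lam ℓ u) (x : X) : lam * u x ≤ ℓ x := by
  linarith [EReal.add_toReal_le_of_coe_add_le (hu x), (gslope u x).toReal_nonneg]

lemma sub_le_mul_dist (hu : IsSubsolution lam ℓ u) (x y : X) :
    u x - u y ≤ (ℓ x - lam * u x) * dist x y :=
  sub_le_mul_dist_of_coe_add_gslope_le (hu x) y

lemma lipschitzWith (hu : IsSubsolution lam ℓ u) (hlam : 0 ≤ lam) {M m : ℝ}
    (hM : ∀ x, ℓ x ≤ M) (hm : ∀ x, m ≤ u x) : LipschitzWith (M - lam * m).toNNReal u :=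
  LipschitzWith.of_le_add_mul' _ fun x y => by
    have hslope : ℓ x - lam * u x ≤ M - lam * m := by nlinarith [hM x, hm x]
    nlinarith [hu.sub_le_mul_dist x y, dist_nonneg (x := x) (y := y)]

lemma continuous [CompactSpace X] (hu : IsSubsolution lam ℓ u) (hlam : 0 ≤ lam)
    (hℓ : ∃ M, ∀ x, ℓ x ≤ M) (hu_lsc : LowerSemicontinuous u) : Continuous u := by
  obtain ⟨M, hM⟩ := hℓ
  obtain ⟨m, hm⟩ := (hu_lsc.lowerSemicontinuousOn _).bddBelow_of_isCompact isCompact_univ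
  exact (hu.lipschitzWith hlam hM fun x => hm ⟨x, trivial, rfl⟩).continuous

lemma le_of_isMinOn_sub (hu : IsSubsolution lam ℓ u) (hv : IsSupersolution lam ℓ v)
    (hlam : 0 < lam) {z : X} (hz : IsMinOn (v - u) Set.univ z) : u z ≤ v z := by
  by_contra! h
  obtain ⟨y, hy⟩ := exists_mul_dist_lt_sub_of_le_coe_add_gslope (hv z)
    (sub_nonneg.2 (hu.mul_le z)) (by nlinarith : ℓ z - lam * u z < ℓ z - lam * v z)
  have hzy : v z - u z ≤ v y - u y := hz (Set.mem_univ y)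
  linarith [hu.sub_le_mul_dist z y]

end IsSubsolution

end

theorem comparison_principle_compact_general {X : Type*} [MetricSpace X] [CompactSpace X]
    (lam : ℝ) (hlam : 0 < lam)
    (ℓ : X → ℝ)
    (hℓb : ∃ M : ℝ, ∀ x, ℓ x ≤ M)
    (u v : X → ℝ) (hu : LowerSemicontinuous u) (hv : LowerSemicontinuous v)
    (hsub : ∀ x, ((lam * u x : ℝ) : EReal) + (gslope u x : EReal) ≤ (ℓ x : EReal))
    (hsup : ∀ x, (ℓ x : EReal) ≤ ((lam * v x : ℝ) : EReal) + (gslope v x : EReal)) :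
    ∀ x, u x ≤ v x := by
  intro x
  have hu_sub : IsSubsolution lam ℓ u := hsub
  have hvu : LowerSemicontinuous (v - u) :=
    hv.add (hu_sub.continuous hlam.le hℓb hu).neg.lowerSemicontinuous
  obtain ⟨z, -, hz⟩ :=
    (hvu.lowerSemicontinuousOn _).exists_isMinOn ⟨x, Set.mem_univ x⟩ isCompact_univ
  have hzx : v z - u z ≤ v x - u x := hz (Set.mem_univ x)
  linarith [hu_sub.le_of_isMinOn_sub hsup hlam hz]

/-- Comparison principle (compact case): on a compact metric space, a bounded lsc subsolution
lies below any bounded lsc supersolution of `λ w + G[w] = ℓ` (λ > 0, ℓ bounded lsc with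
`inf ℓ = 0`). -/
theorem comparison_principle_compact {X : Type*} [MetricSpace X] [CompactSpace X] [Nonempty X]
    (lam : ℝ) (hlam : 0 < lam)
    (ℓ : X → ℝ) (hℓ : LowerSemicontinuous ℓ) (hℓ0 : ∀ x, 0 ≤ ℓ x)
    (hℓb : ∃ M : ℝ, ∀ x, ℓ x ≤ M) (hinfℓ : ⨅ x, ℓ x = 0)
    (u v : X → ℝ) (hu : LowerSemicontinuous u) (hv : LowerSemicontinuous v)
    (hub : ∃ M : ℝ, ∀ x, |u x| ≤ M) (hvb : ∃ M : ℝ, ∀ x, |v x| ≤ M)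
    (hinfu : ⨅ x, u x = 0) (hinfv : ⨅ x, v x = 0)
    (hsub : ∀ x, ((lam * u x : ℝ) : EReal) + (gslope u x : EReal) ≤ (ℓ x : EReal))
    (hsup : ∀ x, (ℓ x : EReal) ≤ ((lam * v x : ℝ) : EReal) + (gslope v x : EReal)) :
    ∀ x, u x ≤ v x :=
  comparison_principle_compact_general lam hlam ℓ hℓb u v hu hv hsub hsup
end

section
/- Let X be a bounded metric space, λ ≥ 0, and ℓ : X → [0,∞) lsc with inf_X ℓ = 0. Then v(x) := ℓ(x) · diam(X) is a supersolution of λ w + G[w] = ℓ (that is, v is lsc, inf v = 0, and λ v + G[v] ≥ ℓ pointwise), and every subsolution w satisfies w ≤ ℓ · diam(X). -/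
/-!
Both halves rest on `d(x, y) ≤ diam X`. Since `ℓ ≥ 0` and `inf ℓ = 0`, the slope of `ℓ · diam X`
at `x` is at least `sup_y (ℓ x - ℓ y) = ℓ x`. Conversely, a subsolution `w` is
`G[w](x)`-Lipschitz towards `x`, so `w x ≤ inf w + G[w](x) · diam X ≤ (ℓ x - λ w x) · diam X`,
which is at most `ℓ x · diam X` whenever `w x ≥ 0` (and trivially so otherwise).
-/

open Filter Topology ENNReal

section GlobalSlope

variable {X : Type*} [MetricSpace X]

theorem ofReal_div_dist_le_gslope (u : X → ℝ) {x y : X} (hyx : y ≠ x) :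
    ENNReal.ofReal ((u x - u y) / dist x y) ≤ gslope u x :=
  le_iSup₂_of_le y hyx le_rfl

theorem sub_le_toReal_gslope_mul_dist {u : X → ℝ} {x : X} (hg : gslope u x ≠ ⊤) (y : X) :
    u x - u y ≤ (gslope u x).toReal * dist x y := by
  rcases eq_or_ne y x with rfl | hyx
  · simp
  have hd : 0 < dist x y := dist_pos.2 hyx.symm
  rw [← div_le_iff₀ hd, ← ENNReal.ofReal_le_iff_le_toReal hg]
  exact ofReal_div_dist_le_gslope u hyx

theorem ofReal_sub_le_gslope_mul_diam (hX : Bornology.IsBounded (Set.univ : Set X))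
    (u : X → ℝ) (x y : X) :
    ENNReal.ofReal (u x - u y) ≤ gslope (fun z => u z * Metric.diam (Set.univ : Set X)) x := by
  rcases le_or_gt (u x - u y) 0 with hle | hpos
  · simp [ENNReal.ofReal_eq_zero.2 hle]
  have hyx : y ≠ x := by rintro rfl; simp at hpos
  have hd : 0 < dist x y := dist_pos.2 hyx.symm
  have hdD : dist x y ≤ Metric.diam (Set.univ : Set X) :=
    Metric.dist_le_diam_of_mem hX (Set.mem_univ x) (Set.mem_univ y)
  refine le_trans (ENNReal.ofReal_le_ofReal ?_) (ofReal_div_dist_le_gslope _ hyx)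
  rw [le_div_iff₀ hd, ← sub_mul]
  exact mul_le_mul_of_nonneg_left hdD hpos.le

theorem ofReal_le_gslope_mul_diam [Nonempty X] (hX : Bornology.IsBounded (Set.univ : Set X))
    {u : X → ℝ} (hu : ⨅ x, u x = 0) (x : X) :
    ENNReal.ofReal (u x) ≤ gslope (fun z => u z * Metric.diam (Set.univ : Set X)) x := by
  set g := gslope (fun z => u z * Metric.diam (Set.univ : Set X)) x
  rcases eq_or_ne g ⊤ with hg | hg
  · simp [hg]
  rw [ENNReal.ofReal_le_iff_le_toReal hg]
  have hsub : u x - g.toReal ≤ ⨅ y, u y := le_ciInf fun y => by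
    have := (ENNReal.ofReal_le_iff_le_toReal hg).1 (ofReal_sub_le_gslope_mul_diam hX u x y)
    linarith
  linarith

theorem le_toReal_gslope_mul_diam [Nonempty X] (hX : Bornology.IsBounded (Set.univ : Set X))
    {w : X → ℝ} (hw : ⨅ x, w x = 0) {x : X} (hg : gslope w x ≠ ⊤) :
    w x ≤ (gslope w x).toReal * Metric.diam (Set.univ : Set X) := by
  have hsub : w x - (gslope w x).toReal * Metric.diam (Set.univ : Set X) ≤ ⨅ y, w y :=
    le_ciInf fun y => by
      have hdD : dist x y ≤ Metric.diam (Set.univ : Set X) :=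
        Metric.dist_le_diam_of_mem hX (Set.mem_univ x) (Set.mem_univ y)
      have := mul_le_mul_of_nonneg_left hdD (ENNReal.toReal_nonneg (a := gslope w x))
      linarith [sub_le_toReal_gslope_mul_dist hg y]
  linarith

end GlobalSlope

theorem EReal.ne_top_and_add_toReal_le_of_coe_add_le {a b : ℝ} {g : ℝ≥0∞}
    (h : (a : EReal) + (g : EReal) ≤ b) : g ≠ ⊤ ∧ a + g.toReal ≤ b := by
  have hg : g ≠ ⊤ := by
    rintro rfl
    simp [EReal.coe_ennreal_top, EReal.add_top_of_ne_bot (EReal.coe_ne_bot a)] at h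
  refine ⟨hg, ?_⟩
  rwa [← ENNReal.ofReal_toReal hg, EReal.coe_ennreal_ofReal,
    max_eq_left ENNReal.toReal_nonneg, ← EReal.coe_add, EReal.coe_le_coe_iff] at h

/-- On a bounded metric space, `v := ℓ · diam X` is a supersolution of `λ w + G[w] = ℓ`
(it is lsc, has infimum `0` and satisfies `λ v + G[v] ≥ ℓ`), and every subsolution `w`
satisfies `w ≤ ℓ · diam X`. -/
theorem diam_supersolution_and_bound {X : Type*} [MetricSpace X] [Nonempty X]
    (hX : Bornology.IsBounded (Set.univ : Set X))
    (lam : ℝ) (hlam : 0 ≤ lam)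
    (ℓ : X → ℝ) (hℓ : LowerSemicontinuous ℓ) (hℓ0 : ∀ x, 0 ≤ ℓ x)
    (hinfℓ : ⨅ x, ℓ x = 0) :
    (LowerSemicontinuous (fun x => ℓ x * Metric.diam (Set.univ : Set X)) ∧
      (⨅ x, ℓ x * Metric.diam (Set.univ : Set X)) = 0 ∧
      ∀ x, (ℓ x : EReal) ≤
        ((lam * (ℓ x * Metric.diam (Set.univ : Set X)) : ℝ) : EReal) +
          (gslope (fun y => ℓ y * Metric.diam (Set.univ : Set X)) x : EReal)) ∧
    ∀ w : X → ℝ, (⨅ x, w x = 0) →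
      (∀ x, ((lam * w x : ℝ) : EReal) + (gslope w x : EReal) ≤ (ℓ x : EReal)) →
      ∀ x, w x ≤ ℓ x * Metric.diam (Set.univ : Set X) := by
  set D := Metric.diam (Set.univ : Set X)
  have hD : 0 ≤ D := Metric.diam_nonneg
  refine ⟨⟨(continuous_mul_const D).comp_lowerSemicontinuous hℓ (monotone_mul_right_of_nonneg hD),
    by rw [← Real.iInf_mul_of_nonneg hD, hinfℓ, zero_mul], fun x => ?_⟩, fun w hw hsub x => ?_⟩
  · have hslope : (ℓ x : EReal) ≤ (gslope (fun y => ℓ y * D) x : EReal) := by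
      rw [← max_eq_left (hℓ0 x), ← EReal.coe_ennreal_ofReal]
      exact EReal.coe_ennreal_le_coe_ennreal_iff.2 (ofReal_le_gslope_mul_diam hX hinfℓ x)
    refine hslope.trans (le_add_of_nonneg_left ?_)
    exact_mod_cast mul_nonneg hlam (mul_nonneg (hℓ0 x) hD)
  · rcases le_or_gt (w x) 0 with hw0 | hw0
    · exact hw0.trans (mul_nonneg (hℓ0 x) hD)
    obtain ⟨hg, hle⟩ := EReal.ne_top_and_add_toReal_le_of_coe_add_le (hsub x)
    calc w x ≤ (gslope w x).toReal * D := le_toReal_gslope_mul_diam hX hw hg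
      _ ≤ ℓ x * D := mul_le_mul_of_nonneg_right (by nlinarith) hD
end
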